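/- The right light cone distance satisfies the triangle inequality: for all indecomposable objects X, Y, Z of the bounded derived category of an abelian Ext-finite category with Serre duality, d•(X,Z) ≤ d•(X,Y) + d•(Y,Z) whenever the right-hand sum is defined. -/

import Mathlib

open CategoryTheory CategoryTheory.Limits CategoryTheory.Pretriangulated

namespace Paper

/-! ### A construction of the bounded derived category of an abelian category. -/

/-- An object of the homotopy category of an abelian category is (cochain-)bounded. -/
def IsBddObj {A : Type*} [Category A] [Abelian A]
    (X : HomotopyCategory A (ComplexShape.up ℤ)) : Prop :=
  ∃ a b : ℤ, ∀ i : ℤ, (i < a ∨ b < i) → IsZero (X.as.X i)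

/-- The bounded homotopy category `K^b(A)`. -/
abbrev KbCat (A : Type*) [Category A] [Abelian A] :=
  ObjectProperty.FullSubcategory (IsBddObj (A := A))

/-- Quasi-isomorphisms in the bounded homotopy category. -/
def qisW (A : Type*) [Category A] [Abelian A] : MorphismProperty (KbCat A) :=
  fun X Y f => HomotopyCategory.quasiIso A (ComplexShape.up ℤ) (X := X.obj) (Y := Y.obj) f.hom

/-- The bounded derived category `D^b(A)` of an abelian category `A`, constructed as the
localization of the bounded homotopy category at the quasi-isomorphisms. -/
def Db (A : Type*) [Category A] [Abelian A] : Type _ := (qisW A).Localization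

noncomputable instance (A : Type*) [Category A] [Abelian A] : Category (Db A) := by
  dsimp [Db]; infer_instance

/-- `D^b` of a category with explicitly given category and abelian structures. -/
def DbOf (H : Type*) (c : Category H) (a : Abelian H) : Type _ := @Db H c a

noncomputable instance (H : Type*) (c : Category H) (a : Abelian H) :
    Category (DbOf H c a) := by
  dsimp [DbOf]; infer_instance


variable {C : Type*} [Category C]

/-- Serre duality data on a `k`-linear category: a Serre functor `S` together with
isomorphisms `Hom(A,B) ≅ Hom(B, S A)*`, natural in both variables. -/
structure SerreFunctorData (k : Type*) [Field k] (C : Type*) [Category C] [Preadditive C]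
    [Linear k C] where
  S : C ≌ C
  equiv : ∀ A B : C, (A ⟶ B) ≃ₗ[k] Module.Dual k (B ⟶ S.functor.obj A)
  nat_right : ∀ (A B B' : C) (g : B ⟶ B') (u : A ⟶ B) (v : B' ⟶ S.functor.obj A),
    equiv A B' (u ≫ g) v = equiv A B u (g ≫ v)
  nat_left : ∀ (A A' B : C) (f : A' ⟶ A) (u : A ⟶ B) (v : B ⟶ S.functor.obj A'),
    equiv A' B (f ≫ u) v = equiv A B u (v ≫ S.functor.map f)

/-- The `n`-th power (n ∈ ℤ) of an auto-equivalence, on objects. -/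
def tpow (τ : C ≌ C) : ℤ → C → C
  | Int.ofNat n, X => (fun Y => τ.functor.obj Y)^[n] X
  | Int.negSucc n, X => (fun Y => τ.inverse.obj Y)^[n + 1] X

section Paths
variable [Limits.HasZeroMorphisms C] [HasBinaryBiproducts C]

/-- One step of a path: a nonzero morphism between indecomposables. -/
def PathStep (A B : C) : Prop :=
  Indecomposable A ∧ Indecomposable B ∧ ∃ f : A ⟶ B, f ≠ 0

/-- There is a path (a chain of nonzero morphisms between indecomposables) from `X` to `Y`. -/
def HasPath (X Y : C) : Prop := Relation.ReflTransGen (PathStep (C := C)) X Y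

/-- The right light cone distance `d•(X,Y) = inf { n : ℤ | there is a path from X to τ^{-n} Y }`,
as an extended real number (so that the infimum of the empty set is `⊤` and `-∞` can occur). -/
noncomputable def lcd (τ : C ≌ C) (X Y : C) : EReal :=
  sInf {e : EReal | ∃ n : ℤ, e = ((n : ℝ) : EReal) ∧ HasPath X (tpow τ (-n) Y)}

/-- The round trip distance. -/
noncomputable def rtd (τ : C ≌ C) (X Y : C) : EReal := lcd τ X Y + lcd τ Y X

/-- Right light cone distance from a set to an object. -/
noncomputable def lcdFrom (τ : C ≌ C) (T : Set C) (X : C) : EReal :=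
  sInf {e : EReal | ∃ t ∈ T, e = lcd τ t X}

/-- Right light cone distance from an object to a set. -/
noncomputable def lcdTo (τ : C ≌ C) (X : C) (T : Set C) : EReal :=
  sInf {e : EReal | ∃ t ∈ T, e = lcd τ X t}

/-- The round trip distance between a set and an object. -/
noncomputable def rtdSet (τ : C ≌ C) (T : Set C) (X : C) : EReal :=
  lcdFrom τ T X + lcdTo τ X T

/-- An object is directing if there is no nontrivial path from it to itself, i.e. no path
from `X` to `X` passing in order through objects `Y`, `Z` admitting a nonzero radical
(= non-invertible) morphism `Y ⟶ Z`. -/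
def Directing (X : C) : Prop :=
  ¬ ∃ Y Z : C, HasPath X Y ∧ HasPath Y Z ∧ HasPath Z X ∧
      Indecomposable Y ∧ Indecomposable Z ∧ ∃ f : Y ⟶ Z, f ≠ 0 ∧ ¬ IsIso f

end Paths

end Paper

/-! Composing a path `X ⇝ τ^{-m} Y` with the image under `τ^{-m}` of a path `Y ⇝ τ^{-n} Z`
gives a path `X ⇝ τ^{-m} τ^{-n} Z ≅ τ^{-(m+n)} Z`, so every pair of witnesses for
`d•(X,Y)` and `d•(Y,Z)` yields a witness for `d•(X,Z)` with their sum; passing to infima in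
`EReal` gives the triangle inequality wherever the sum is defined. -/

theorem CategoryTheory.Indecomposable.of_iso {C : Type*} [Category C] [HasZeroMorphisms C]
    [HasBinaryBiproducts C] {X Y : C} (hX : Indecomposable X) (e : X ≅ Y) : Indecomposable Y :=
  ⟨fun hY => hX.1 (hY.of_iso e), fun U V i => hX.2 U V (e ≪≫ i)⟩

theorem CategoryTheory.Indecomposable.map {C D : Type*} [Category C] [Category D]
    [Preadditive C] [Preadditive D] [HasBinaryBiproducts C] [HasBinaryBiproducts D]
    (e : C ≌ D) {X : C} (hX : Indecomposable X) : Indecomposable (e.functor.obj X) := by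
  have := preservesBinaryBiproducts_of_preservesBinaryProducts e.inverse
  have reflect : ∀ W : D, IsZero (e.inverse.obj W) → IsZero W := fun W hW =>
    (e.functor.map_isZero hW).of_iso (e.counitIso.app W).symm
  refine ⟨fun hz => hX.1 ((e.inverse.map_isZero hz).of_iso (e.unitIso.app X)), fun U V i => ?_⟩
  exact (hX.2 _ _ (e.unitIso.app X ≪≫ e.inverse.mapIso i ≪≫ e.inverse.mapBiprod U V)).imp
    (reflect U) (reflect V)

namespace Paper

section Iso

variable {C : Type*} [Category C] [HasZeroMorphisms C] [HasBinaryBiproducts C]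

theorem PathStep.trans_iso {A B B' : C} (h : PathStep A B) (e : B ≅ B') : PathStep A B' :=
  let ⟨hA, hB, f, hf⟩ := h
  ⟨hA, hB.of_iso e, f ≫ e.hom, fun h0 => hf ((cancel_mono e.hom).mp (h0.trans zero_comp.symm))⟩

theorem HasPath.trans_iso {X Y Y' : C} (hX : Indecomposable X) (h : HasPath X Y) (e : Y ≅ Y') :
    HasPath X Y' := by
  rcases Relation.ReflTransGen.cases_tail h with rfl | ⟨W, hXW, hWY⟩
  · exact .single ⟨hX, hX.of_iso e, e.hom, fun h0 => hX.1 (IsZero.of_mono_eq_zero _ h0)⟩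
  · exact hXW.tail (PathStep.trans_iso hWY e)

end Iso

section Equivalence

variable {C D : Type*} [Category C] [Category D] [Preadditive C] [Preadditive D]
  [HasBinaryBiproducts C] [HasBinaryBiproducts D]

theorem PathStep.map (e : C ≌ D) {A B : C} (h : PathStep A B) :
    PathStep (e.functor.obj A) (e.functor.obj B) :=
  let ⟨hA, hB, f, hf⟩ := h
  ⟨hA.map e, hB.map e, e.functor.map f, mt e.functor.map_eq_zero_iff.mp hf⟩

theorem HasPath.map (e : C ≌ D) {X Y : C} (h : HasPath X Y) :
    HasPath (e.functor.obj X) (e.functor.obj Y) :=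
  Relation.ReflTransGen.lift e.functor.obj (fun _ _ => PathStep.map e) _ _ h

theorem HasPath.iterate_map (e : C ≌ C) {X Y : C} (h : HasPath X Y) (n : ℕ) :
    HasPath (e.functor.obj^[n] X) (e.functor.obj^[n] Y) := by
  induction n with
  | zero => exact h
  | succ n ih =>
    simp only [Function.iterate_succ_apply']
    exact ih.map e

theorem HasPath.map_tpow (τ : C ≌ C) {X Y : C} (h : HasPath X Y) :
    ∀ a : ℤ, HasPath (tpow τ a X) (tpow τ a Y)
  | Int.ofNat n => h.iterate_map τ n
  | Int.negSucc n => h.iterate_map τ.symm (n + 1)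

end Equivalence

section Translate

variable {C : Type*} [Category C]

noncomputable def tpowSuccIso (τ : C ≌ C) : ∀ (a : ℤ) (X : C),
    tpow τ (a + 1) X ≅ τ.functor.obj (tpow τ a X)
  | Int.ofNat n, X => eqToIso (Function.iterate_succ_apply' _ n X)
  | Int.negSucc 0, X => (τ.counitIso.app X).symm
  | Int.negSucc (n + 1), X =>
    (τ.counitIso.app _).symm ≪≫
      τ.functor.mapIso (eqToIso (Function.iterate_succ_apply' _ (n + 1) X).symm)

theorem tpow_add (τ : C ≌ C) (a b : ℤ) (X : C) :
    Nonempty (tpow τ (a + b) X ≅ tpow τ a (tpow τ b X)) := by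
  induction a using Int.induction_on with
  | zero => rw [zero_add]; exact ⟨Iso.refl _⟩
  | succ i ih =>
    obtain ⟨e⟩ := ih
    rw [add_right_comm]
    exact ⟨tpowSuccIso τ _ X ≪≫ τ.functor.mapIso e ≪≫ (tpowSuccIso τ _ _).symm⟩
  | pred i ih =>
    obtain ⟨e⟩ := ih
    generalize hc : -(i : ℤ) - 1 = c
    rw [show -(i : ℤ) = c + 1 by omega, add_right_comm] at e
    exact ⟨τ.fullyFaithfulFunctor.preimageIso
      ((tpowSuccIso τ _ X).symm ≪≫ e ≪≫ tpowSuccIso τ _ _)⟩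

end Translate

section LightCone

variable {C : Type*} [Category C] [Preadditive C] [HasBinaryBiproducts C]

theorem HasPath.trans_tpow (τ : C ≌ C) {X Y Z : C} {m n : ℤ} (hX : Indecomposable X)
    (hXY : HasPath X (tpow τ (-m) Y)) (hYZ : HasPath Y (tpow τ (-n) Z)) :
    HasPath X (tpow τ (-(m + n)) Z) := by
  rw [neg_add]
  have hpath : HasPath X (tpow τ (-m) (tpow τ (-n) Z)) := hXY.trans (hYZ.map_tpow τ (-m))
  exact hpath.trans_iso hX (tpow_add τ (-m) (-n) Z).some.symm

theorem lcd_le_of_hasPath {τ : C ≌ C} {X Y : C} {n : ℤ} (h : HasPath X (tpow τ (-n) Y)) :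
    lcd τ X Y ≤ ((n : ℝ) : EReal) :=
  sInf_le ⟨n, rfl, h⟩

theorem exists_hasPath_of_lcd_lt {τ : C ≌ C} {X Y : C} {a : EReal} (h : lcd τ X Y < a) :
    ∃ n : ℤ, HasPath X (tpow τ (-n) Y) ∧ ((n : ℝ) : EReal) < a := by
  obtain ⟨_, ⟨n, rfl, hn⟩, hlt⟩ := sInf_lt_iff.mp h
  exact ⟨n, hn, hlt⟩

end LightCone

/-- the right light cone distance satisfies the triangle inequality
`d•(X,Z) ≤ d•(X,Y) + d•(Y,Z)` whenever the right-hand sum is defined. -/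
theorem lcd_triangle_inequality
    (k : Type*) [Field k] [IsAlgClosed k]
    (A : Type*) [Category A] [Abelian A] [Linear k A]
    {C : Type*} [Category C] [Preadditive C] [Linear k C] [HasZeroObject C]
    [HasShift C ℤ] [∀ n : ℤ, (shiftFunctor C n).Additive] [Pretriangulated C]
    [HasBinaryBiproducts C]
    -- `C` is the bounded derived category of the abelian category `A`
    (hdb : Nonempty (C ≌ Db A))
    -- Ext-finiteness of `A`, expressed as Hom-finiteness of `D^b(A)`
    (hfin : ∀ X Y : C, FiniteDimensional k (X ⟶ Y))
    -- Serre duality, and the Auslander–Reiten translate `τ` with `S ≅ τ ∘ [1]`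
    (S : SerreFunctorData k C) (τ : C ≌ C)
    (hτ : Nonempty (S.S.functor ≅ τ.functor ⋙ shiftFunctor C (1 : ℤ)))
    (X Y Z : C) (hX : Indecomposable X) (hY : Indecomposable Y) (hZ : Indecomposable Z)
    -- the sum `d•(X,Y) + d•(Y,Z)` is defined
    (hdef : ¬ (lcd τ X Y = ⊤ ∧ lcd τ Y Z = ⊥) ∧ ¬ (lcd τ X Y = ⊥ ∧ lcd τ Y Z = ⊤)) :
    lcd τ X Z ≤ lcd τ X Y + lcd τ Y Z := by
  refine EReal.le_add_of_forall_gt (not_and_or.mp hdef.2) (not_and_or.mp hdef.1)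
    fun a ha b hb => ?_
  obtain ⟨m, hm, hma⟩ := exists_hasPath_of_lcd_lt ha
  obtain ⟨n, hn, hnb⟩ := exists_hasPath_of_lcd_lt hb
  calc lcd τ X Z ≤ (((m + n : ℤ) : ℝ) : EReal) := lcd_le_of_hasPath (hm.trans_tpow τ hX hn)
    _ = ((m : ℝ) : EReal) + ((n : ℝ) : EReal) := by norm_cast
    _ ≤ a + b := add_le_add hma.le hnb.le

end Paper
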